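/- Every window of the lattice β-strand of length N ≥ 5 satisfies Φ = 1; indeed for every 3 ≤ i ≤ N−2, the 5-tuple (B(i−2),…,B(i+2)) or its reversal is equivalent, by a lattice rotation and translation, to conformation 1. Consequently the β-strand is a minimal conformation with E₅ = −(N−4). -/
import Mathlib


/-- Points of the cubic lattice `ℤ³`. -/
abbrev P3 : Type := Fin 3 → ℤ

def e1 : P3 := ![1, 0, 0]
def e2 : P3 := ![0, 1, 0]
def e3 : P3 := ![0, 0, 1]

/-- Squared Euclidean norm of an integer vector; it equals `1` iff the
Euclidean norm equals `1`. -/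
def sqNorm (v : P3) : ℤ := ∑ k, (v k) ^ 2

/-- A conformation of length `N`: an injective map on `{1, …, N}` whose
consecutive steps have Euclidean length one. -/
def IsConformation (N : ℕ) (Γ : ℕ → P3) : Prop :=
  Set.InjOn Γ (Set.Icc 1 N) ∧ ∀ i, 1 ≤ i → i < N → sqNorm (Γ (i + 1) - Γ i) = 1

/-- A lattice rotation: an orthogonal integer matrix of determinant one
(equivalently, a linear isometry of `ℝ³` mapping `ℤ³` onto `ℤ³` with
determinant one). -/
def IsLatticeRotation (R : Matrix (Fin 3) (Fin 3) ℤ) : Prop :=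
  R.transpose * R = 1 ∧ R.det = 1

/-- Equivalence of length-5 conformations: `Δ' k = R (Δ k) + t` for a lattice
rotation `R` and translation `t ∈ ℤ³`. -/
def Equiv5 (Δ Δ' : Fin 5 → P3) : Prop :=
  ∃ (R : Matrix (Fin 3) (Fin 3) ℤ) (t : P3),
    IsLatticeRotation R ∧ ∀ k, Δ' k = R.mulVec (Δ k) + t

/-- Reversal of a length-5 conformation (`k ↦ Δ (6 - k)` in 1-based indexing). -/
def rev5 (Δ : Fin 5 → P3) : Fin 5 → P3 := fun k => Δ k.rev

/-- Conformation 1: vertices (0,0,0), (1,0,0), (1,1,0), (0,1,0), (0,1,1). -/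
def conf1 : Fin 5 → P3 := ![![0, 0, 0], ![1, 0, 0], ![1, 1, 0], ![0, 1, 0], ![0, 1, 1]]

/-- Conformation 2: vertices (0,0,0), (0,1,0), (−1,1,0), (−1,1,1), (−1,0,1). -/
def conf2 : Fin 5 → P3 := ![![0, 0, 0], ![0, 1, 0], ![-1, 1, 0], ![-1, 1, 1], ![-1, 0, 1]]

/-- The `i`-th window of `Γ`: the 5-tuple `(Γ(i-2), …, Γ(i+2))`. -/
def window (Γ : ℕ → P3) (i : ℕ) : Fin 5 → P3 := fun k => Γ (i - 2 + (k : ℕ))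

/-- `Φ(Δ) = 1`: the 5-tuple `Δ` or its reversal is equivalent to
conformation 1 or to conformation 2. -/
def WindowGood (Δ : Fin 5 → P3) : Prop :=
  Equiv5 Δ conf1 ∨ Equiv5 (rev5 Δ) conf1 ∨ Equiv5 Δ conf2 ∨ Equiv5 (rev5 Δ) conf2

open Classical in
/-- The function `Φ` on length-5 conformations. -/
noncomputable def Phi (Δ : Fin 5 → P3) : ℤ := if WindowGood Δ then 1 else 0

/-- The energy `E₅(Γ) = −Σ_{i=3}^{N−2} Φ(Γ_i)`. -/
noncomputable def E5 (N : ℕ) (Γ : ℕ → P3) : ℤ :=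
  -∑ i ∈ Finset.Icc 3 (N - 2), Phi (window Γ i)

/-- A minimal conformation: a conformation all of whose windows satisfy `Φ = 1`. -/
def IsMinimal (N : ℕ) (Γ : ℕ → P3) : Prop :=
  IsConformation N Γ ∧ ∀ i, 3 ≤ i → i ≤ N - 2 → WindowGood (window Γ i)

/-- The walk starting at the origin (in 1-based indexing) whose steps
cyclically repeat the given list. -/
def cyclicWalk (steps : List P3) : ℕ → P3
  | 0 => 0
  | 1 => 0
  | n + 2 => cyclicWalk steps (n + 1) + steps.getD (n % steps.length) 0

/-- The 16-term step sequence of the lattice α-helix. -/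
def alphaStepList : List P3 :=
  [e1, e2, -e1, e3, -e2, e1, e2, e3, -e1, -e2, e1, e3, e2, -e1, -e2, e3]

/-- The 4-term step sequence of the lattice β-strand. -/
def betaStepList : List P3 := [e1, e2, -e1, e3]

/-- The lattice α-helix (`H(1) = 0`, steps cyclically repeating `alphaStepList`). -/
def alphaHelix : ℕ → P3 := cyclicWalk alphaStepList

/-- The lattice β-strand (`B(1) = 0`, steps cyclically repeating `betaStepList`). -/
def betaStrand : ℕ → P3 := cyclicWalk betaStepList

/-- The four directed types of windows. -/
inductive DType : Type
  | r1  -- →1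
  | l1  -- ←1
  | r2  -- →2
  | l2  -- ←2
deriving DecidableEq

/-- A window `Δ` has directed type `→1` (resp. `→2`) if it is equivalent to
conformation 1 (resp. 2), and `←1` (resp. `←2`) if its reversal is. -/
def HasType (Δ : Fin 5 → P3) : DType → Prop
  | DType.r1 => Equiv5 Δ conf1
  | DType.l1 => Equiv5 (rev5 Δ) conf1
  | DType.r2 => Equiv5 Δ conf2
  | DType.l2 => Equiv5 (rev5 Δ) conf2

/-- The six allowed ordered pairs of directed types of consecutive windows:
(→1,←1), (←1,→1), (→1,→2), (→2,←2), (←2,←1), (←2,→2). -/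
def allowedPairs : List (DType × DType) :=
  [(DType.r1, DType.l1), (DType.l1, DType.r1), (DType.r1, DType.r2),
   (DType.r2, DType.l2), (DType.l2, DType.l1), (DType.l2, DType.r2)]

/-- `w` is the type sequence of `Γ` (a conformation of length `N`):
`w` has length `N − 4` and its `j`-th letter is the directed type of the
window `Γ_{3+j}`, `j = 0, …, N−5`. -/
def HasTypeSeq (N : ℕ) (Γ : ℕ → P3) (w : List DType) : Prop :=
  w.length = N - 4 ∧ ∀ j (h : j < w.length), HasType (window Γ (3 + j)) (w.get ⟨j, h⟩)

/-- The word `α = →1→2←2←1`. -/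
def wordAlpha : List DType := [DType.r1, DType.r2, DType.l2, DType.l1]

/-- The word `β = →1←1`. -/
def wordBeta : List DType := [DType.r1, DType.l1]

/-- `v` is a finite concatenation of copies of the words `α` and `β`. -/
def IsABConcat (v : List DType) : Prop :=
  ∃ L : List (List DType), (∀ u ∈ L, u = wordAlpha ∨ u = wordBeta) ∧ v = L.flatten

/-- A word is admissible if it is a contiguous subword (factor) of some finite
concatenation of copies of `α` and `β`. -/
def Admissible (w : List DType) : Prop := ∃ v, IsABConcat v ∧ w <:+: v

/-- The two kinds of monomers. -/
inductive AB : Type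
  | A
  | B
deriving DecidableEq

/-- The number of occurrences of the letter `c` in the `i`-th 5-tuple
`S(i−2), …, S(i+2)` of the sequence `S`. -/
def countLetter (c : AB) (S : ℕ → AB) (i : ℕ) : ℕ :=
  ((Finset.Icc (i - 2) (i + 2)).filter fun k => S k = c).card

open Classical in
/-- `Φ₁(Δ) = 1` iff `Δ` or its reversal is equivalent to conformation 1. -/
noncomputable def Phi1 (Δ : Fin 5 → P3) : ℝ :=
  if Equiv5 Δ conf1 ∨ Equiv5 (rev5 Δ) conf1 then 1 else 0

open Classical in
/-- `Φ₂(Δ) = 1` iff `Δ` or its reversal is equivalent to conformation 2. -/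
noncomputable def Phi2 (Δ : Fin 5 → P3) : ℝ :=
  if Equiv5 Δ conf2 ∨ Equiv5 (rev5 Δ) conf2 then 1 else 0

/-- The heteropolymer energy
`E₅′(S,Γ) = −Σᵢ [#_B(Sᵢ)(Φ₁(Γᵢ) + ε Φ₂(Γᵢ)) + #_A(Sᵢ)(Φ₂(Γᵢ) + ε Φ₁(Γᵢ))]`. -/
noncomputable def E5' (ε : ℝ) (S : ℕ → AB) (N : ℕ) (Γ : ℕ → P3) : ℝ :=
  -∑ i ∈ Finset.Icc 3 (N - 2),
    ((countLetter AB.B S i : ℝ) * (Phi1 (window Γ i) + ε * Phi2 (window Γ i)) +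
      (countLetter AB.A S i : ℝ) * (Phi2 (window Γ i) + ε * Phi1 (window Γ i)))


lemma betaStrand_step (m : ℕ) :
    betaStrand (m + 2) = betaStrand (m + 1) + betaStepList.getD (m % 4) 0 := by
  have h : betaStepList.length = 4 := by decide
  simp only [betaStrand, cyclicWalk, h]

/-- Translation invariance of equivalence to a fixed conformation. -/
lemma equiv5_translate (Δ C : Fin 5 → P3) (v : P3) (h : Equiv5 Δ C) :
    Equiv5 (fun k => Δ k + v) C := by
  obtain ⟨R, t, hR, hEq⟩ := h
  refine ⟨R, t - R.mulVec v, hR, fun k => ?_⟩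
  rw [Matrix.mulVec_add, hEq k]
  abel

lemma betaStrand_periodic (n : ℕ) :
    betaStrand (n + 5) = betaStrand (n + 1) + ![0, 1, 1] := by
  induction n with
  | zero => decide
  | succ m ih =>
    have h1 : betaStrand (m + 6) = betaStrand (m + 5) + betaStepList.getD (m % 4) 0 := by
      have := betaStrand_step (m + 4)
      rwa [show m + 4 + 2 = m + 6 by ring, show m + 4 + 1 = m + 5 by ring,
        Nat.add_mod_right] at this
    rw [show m + 1 + 5 = m + 6 by ring, h1, ih, show m + 1 + 1 = m + 2 by ring,
      betaStrand_step m]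
    abel

/-- Closed form for the β-strand. -/
lemma betaStrand_closed (n : ℕ) (hn : 1 ≤ n) :
    betaStrand n = ![((n / 2 % 2 : ℕ) : ℤ), (((n + 1) / 4 : ℕ) : ℤ), (((n - 1) / 4 : ℕ) : ℤ)] := by
  induction n, hn using Nat.le_induction with
  | base => decide
  | succ n hn ih =>
    obtain ⟨m, rfl⟩ : ∃ m, n = m + 1 := ⟨n - 1, by omega⟩
    rw [show m + 1 + 1 = m + 2 by ring, betaStrand_step m, ih]
    have h4 : m % 4 = 0 ∨ m % 4 = 1 ∨ m % 4 = 2 ∨ m % 4 = 3 := by omega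
    rcases h4 with h | h | h | h <;>
      rw [h] <;>
      · funext k
        fin_cases k <;>
          simp [betaStepList, e1, e2, e3] <;>
          omega

lemma window_shift (j : ℕ) (hj : 3 ≤ j) :
    window betaStrand (j + 4) = fun k => window betaStrand j k + ![0, 1, 1] := by
  funext k
  show betaStrand (j + 4 - 2 + (k : ℕ)) = betaStrand (j - 2 + (k : ℕ)) + ![0, 1, 1]
  have h1 : j + 4 - 2 + (k : ℕ) = (j - 2 + (k : ℕ) - 1) + 5 := by omega
  have h2 : j - 2 + (k : ℕ) = (j - 2 + (k : ℕ) - 1) + 1 := by omega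
  rw [h1, betaStrand_periodic, ← h2]

lemma beta_window_good : ∀ i, 3 ≤ i →
    Equiv5 (window betaStrand i) conf1 ∨ Equiv5 (rev5 (window betaStrand i)) conf1 := by
  intro i
  induction i using Nat.strong_induction_on with
  | _ i ih =>
    intro hi
    by_cases h6 : i ≤ 6
    · interval_cases i
      · exact Or.inl ⟨1, 0, by constructor <;> decide, by decide⟩
      · exact Or.inr ⟨!![-1,0,0;0,0,-1;0,-1,0], ![1,1,1], by constructor <;> decide, by decide⟩
      · exact Or.inl ⟨!![-1,0,0;0,0,1;0,1,0], ![1,0,-1], by constructor <;> decide, by decide⟩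
      · exact Or.inr ⟨!![1,0,0;0,-1,0;0,0,-1], ![0,2,1], by constructor <;> decide, by decide⟩
    · have hj : 3 ≤ i - 4 := by omega
      have hlt : i - 4 < i := by omega
      have heq : window betaStrand i = fun k => window betaStrand (i - 4) k + ![0,1,1] := by
        have := window_shift (i - 4) hj
        rwa [show i - 4 + 4 = i by omega] at this
      rcases ih (i - 4) hlt hj with h | h
      · exact Or.inl (heq ▸ equiv5_translate _ _ _ h)
      · refine Or.inr ?_
        have hrev : rev5 (window betaStrand i) =
            fun k => rev5 (window betaStrand (i - 4)) k + ![0,1,1] := by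
          funext k
          show window betaStrand i k.rev = _
          rw [heq]
          rfl
        exact hrev ▸ equiv5_translate _ _ _ h

lemma beta_conformation (N : ℕ) : IsConformation N betaStrand := by
  constructor
  · intro m hm n hn h
    rw [betaStrand_closed m hm.1, betaStrand_closed n hn.1] at h
    have h0 : (m / 2 % 2 : ℕ) = n / 2 % 2 := by
      have := congrFun h 0
      simp only [Matrix.cons_val_zero, Matrix.cons_val_one, Matrix.head_cons, Matrix.cons_val_two, Matrix.tail_cons] at this
      exact_mod_cast this
    have h1 : ((m + 1) / 4 : ℕ) = (n + 1) / 4 := by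
      have := congrFun h 1
      simp only [Matrix.cons_val_zero, Matrix.cons_val_one, Matrix.head_cons, Matrix.cons_val_two, Matrix.tail_cons] at this
      exact_mod_cast this
    have h2 : ((m - 1) / 4 : ℕ) = (n - 1) / 4 := by
      have := congrFun h 2
      simp only [Matrix.cons_val_zero, Matrix.cons_val_one, Matrix.head_cons, Matrix.cons_val_two, Matrix.tail_cons] at this
      exact_mod_cast this
    have hm1 := hm.1
    have hn1 := hn.1
    omega
  · intro i hi _
    obtain ⟨m, rfl⟩ : ∃ m, i = m + 1 := ⟨i - 1, by omega⟩
    rw [show m + 1 + 1 = m + 2 by ring, betaStrand_step m, add_sub_cancel_left]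
    have h4 : m % 4 = 0 ∨ m % 4 = 1 ∨ m % 4 = 2 ∨ m % 4 = 3 := by omega
    rcases h4 with h | h | h | h <;> rw [h] <;> decide

/-- Every window of the lattice β-strand of length `N ≥ 5`, or its
reversal, is equivalent to conformation 1; consequently the β-strand is a
minimal conformation with `E₅ = −(N−4)`. -/
theorem betaStrand_minimal (N : ℕ) (hN : 5 ≤ N) :
    (∀ i, 3 ≤ i → i ≤ N - 2 →
      Equiv5 (window betaStrand i) conf1 ∨ Equiv5 (rev5 (window betaStrand i)) conf1) ∧
      IsMinimal N betaStrand ∧ E5 N betaStrand = -((N : ℤ) - 4) := by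
  have hmain := beta_window_good
  refine ⟨fun i hi _ => hmain i hi, ⟨beta_conformation N, fun i hi _ => ?_⟩, ?_⟩
  · rcases hmain i hi with h | h
    · exact Or.inl h
    · exact Or.inr (Or.inl h)
  · unfold E5
    have hsum : ∀ i ∈ Finset.Icc 3 (N - 2), Phi (window betaStrand i) = 1 := by
      intro i hi
      rw [Finset.mem_Icc] at hi
      have hw : WindowGood (window betaStrand i) := by
        rcases hmain i hi.1 with h | h
        · exact Or.inl h
        · exact Or.inr (Or.inl h)
      simp [Phi, hw]
    rw [Finset.sum_congr rfl hsum, Finset.sum_const, Nat.card_Icc, nsmul_eq_mul, mul_one]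
    have h1 : N - 2 + 1 - 3 = N - 4 := by omega
    rw [h1]
    have h2 : ((N - 4 : ℕ) : ℤ) = (N : ℤ) - 4 := by omega
    rw [h2]
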